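/- Let p₁, p₂, p₃ ∈ ℝ³ be pairwise distinct and fix i ∈ {1, 2, 3}. Then (for every t ∈ T and every k ≠ i, ‖t − p_i‖ < ‖t − p_k‖) if and only if (for every k ≠ i: p_{i,1} = p_{k,1}, p_{i,2} = p_{k,2}, and |p_{i,3}| < |p_{k,3}|). (Lemma 3, first case: the three-pursuer barrier depends on pursuer P_i alone iff P_i shares its horizontal projection with each other pursuer and is strictly closer to T.) -/

import Mathlib

/-!
For `t` in a linear subspace `K`, the gap `‖t - y‖² - ‖t - x‖² = ‖y‖² - ‖x‖² + 2 ⟪t, x - y⟫`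
is affine in `t`; along each line `s ↦ s • t` it stays positive only if its slope vanishes.
So `x` beats `y` everywhere on `K` iff `x - y ⊥ K` and `‖x‖ < ‖y‖`. For the plane `z₃ = 0`,
`x - y ⊥ T` says that `x` and `y` have the same horizontal projection, and then `‖x‖ < ‖y‖`
reduces to `|x₃| < |y₃|`.
-/

open RealInnerProductSpace

theorem forall_mem_norm_sub_lt_norm_sub_iff {E : Type*} [NormedAddCommGroup E]
    [InnerProductSpace ℝ E] (K : Submodule ℝ E) (x y : E) :
    (∀ t ∈ K, ‖t - x‖ < ‖t - y‖) ↔ x - y ∈ Kᗮ ∧ ‖x‖ < ‖y‖ := by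
  have gap (t : E) : ‖t - y‖ ^ 2 - ‖t - x‖ ^ 2 = ‖y‖ ^ 2 - ‖x‖ ^ 2 + 2 * ⟪t, x - y⟫ := by
    rw [norm_sub_sq_real, norm_sub_sq_real, inner_sub_right]
    ring
  have lt_iff_gap_pos (t : E) : ‖t - x‖ < ‖t - y‖ ↔ 0 < ‖y‖ ^ 2 - ‖x‖ ^ 2 + 2 * ⟪t, x - y⟫ := by
    rw [← gap, sub_pos, pow_lt_pow_iff_left₀ (norm_nonneg _) (norm_nonneg _) two_ne_zero]
  have norm_lt_iff : ‖x‖ < ‖y‖ ↔ 0 < ‖y‖ ^ 2 - ‖x‖ ^ 2 := by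
    rw [sub_pos, pow_lt_pow_iff_left₀ (norm_nonneg _) (norm_nonneg _) two_ne_zero]
  simp only [lt_iff_gap_pos, norm_lt_iff, Submodule.mem_orthogonal]
  constructor
  · intro H
    refine ⟨fun t ht => ?_, by simpa using H 0 K.zero_mem⟩
    by_contra hne
    have := H ((-(‖y‖ ^ 2 - ‖x‖ ^ 2) / (2 * ⟪t, x - y⟫)) • t) (K.smul_mem _ ht)
    rw [real_inner_smul_left, ← mul_assoc, mul_comm 2, mul_assoc,
      div_mul_cancel₀ _ (mul_ne_zero two_ne_zero hne)] at this
    linarith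
  · rintro ⟨horth, hnorm⟩ t ht
    simpa [horth t ht] using hnorm

noncomputable def targetPlane : Submodule ℝ (EuclideanSpace ℝ (Fin 3)) :=
  LinearMap.ker (EuclideanSpace.proj (𝕜 := ℝ) (2 : Fin 3)).toLinearMap

theorem mem_targetPlane {t : EuclideanSpace ℝ (Fin 3)} : t ∈ targetPlane ↔ t 2 = 0 :=
  LinearMap.mem_ker

theorem mem_targetPlane_orthogonal {v : EuclideanSpace ℝ (Fin 3)} :
    v ∈ targetPlaneᗮ ↔ v 0 = 0 ∧ v 1 = 0 := by
  rw [Submodule.mem_orthogonal]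
  constructor
  · intro h
    have h0 := h (EuclideanSpace.single 0 1) (by simp [mem_targetPlane])
    have h1 := h (EuclideanSpace.single 1 1) (by simp [mem_targetPlane])
    simp_all [EuclideanSpace.inner_single_left]
  · rintro ⟨h0, h1⟩ t ht
    rw [mem_targetPlane] at ht
    simp [PiLp.inner_apply, Fin.sum_univ_three, h0, h1, ht]

theorem EuclideanSpace.norm_lt_norm_iff_abs_lt_abs {x y : EuclideanSpace ℝ (Fin 3)}
    (h0 : x 0 = y 0) (h1 : x 1 = y 1) : ‖x‖ < ‖y‖ ↔ |x 2| < |y 2| := by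
  rw [← pow_lt_pow_iff_left₀ (norm_nonneg _) (norm_nonneg _) two_ne_zero, ← sq_lt_sq,
    EuclideanSpace.norm_sq_eq, EuclideanSpace.norm_sq_eq]
  simp [Fin.sum_univ_three, h0, h1]

theorem forall_mem_targetPlane_norm_sub_lt_iff (x y : EuclideanSpace ℝ (Fin 3)) :
    (∀ t ∈ targetPlane, ‖t - x‖ < ‖t - y‖) ↔ x 0 = y 0 ∧ x 1 = y 1 ∧ |x 2| < |y 2| := by
  rw [forall_mem_norm_sub_lt_norm_sub_iff, mem_targetPlane_orthogonal]
  simp only [PiLp.sub_apply, sub_eq_zero, and_assoc]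
  exact and_congr_right fun h0 => and_congr_right fun h1 =>
    EuclideanSpace.norm_lt_norm_iff_abs_lt_abs h0 h1

theorem three_pursuer_single_active_general (p : Fin 3 → EuclideanSpace ℝ (Fin 3))
    (i : Fin 3) :
    (∀ t : EuclideanSpace ℝ (Fin 3), t 2 = 0 → ∀ k, k ≠ i → ‖t - p i‖ < ‖t - p k‖) ↔
    (∀ k, k ≠ i → p i 0 = p k 0 ∧ p i 1 = p k 1 ∧ |p i 2| < |p k 2|) := by
  simp only [← forall_mem_targetPlane_norm_sub_lt_iff, mem_targetPlane]
  exact ⟨fun H k hk t ht => H t ht k hk, fun H t ht k hk => H k hk t ht⟩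

/-- Lemma 3 (first case): the three-pursuer barrier depends on pursuer `P_i` alone iff
`P_i` shares its horizontal projection with each other pursuer and is strictly closer to
the target plane. -/
theorem three_pursuer_single_active (p : Fin 3 → EuclideanSpace ℝ (Fin 3))
    (hdist : Function.Injective p) (i : Fin 3) :
    (∀ t : EuclideanSpace ℝ (Fin 3), t 2 = 0 → ∀ k, k ≠ i → ‖t - p i‖ < ‖t - p k‖) ↔
    (∀ k, k ≠ i → p i 0 = p k 0 ∧ p i 1 = p k 1 ∧ |p i 2| < |p k 2|) :=
  three_pursuer_single_active_general p i
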